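/- arXiv:2102.04239 — 2 statements merged into one kernel-verified Lean document; each statement's English description precedes it below -/
import Mathlib

section
/- Let X be a finite simple connected graph with spanning tree T, and let f be an automorphism of X with M_T(f) = id. If two distinct fundamental oriented cycles C_i and C_j of T intersect nontrivially, then f fixes C_i ∪ C_j pointwise (on vertices and darts). -/
open SimpleGraph
variable {V : Type*}

variable {V : Type*}

/-- The cycle space (= first homology with coefficients in `R`) of a graph,
realized as antisymmetric flows supported on edges with zero divergence. -/
def cycleSpace (R : Type*) [CommRing R] [Fintype V] (G : SimpleGraph V) :
    Submodule R (V → V → R) where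
  carrier := {f | (∀ u v, ¬ G.Adj u v → f u v = 0) ∧ (∀ u v, f u v = - f v u) ∧
    (∀ u, ∑ v, f u v = 0)}
  add_mem' := by
    rintro f g ⟨hf1, hf2, hf3⟩ ⟨hg1, hg2, hg3⟩
    refine ⟨fun u v h => by simp [hf1 u v h, hg1 u v h], fun u v => ?_, fun u => ?_⟩
    · simp only [Pi.add_apply]; rw [hf2 u v, hg2 u v]; ring
    · simp [Finset.sum_add_distrib, hf3 u, hg3 u]
  zero_mem' := ⟨fun _ _ _ => rfl, fun _ _ => by simp, fun _ => by simp⟩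
  smul_mem' := by
    rintro c f ⟨h1, h2, h3⟩
    refine ⟨fun u v h => by simp [h1 u v h], fun u v => by simp [h2 u v], fun u => ?_⟩
    simp only [Pi.smul_apply, smul_eq_mul]
    rw [← Finset.mul_sum, h3 u, mul_zero]

/-- An automorphism acts trivially (as the identity) on `H_1(X,R)`. -/
def FixesH1 (R : Type*) [CommRing R] [Fintype V] (G : SimpleGraph V) (f : G ≃g G) : Prop :=
  ∀ c ∈ cycleSpace R G, ∀ u v : V, c (f u) (f v) = c u v

/-!
Since `f` fixes the integral flow of every oriented cycle, it maps each dart of a fundamental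
cycle `C` to a dart of `C`: on `C` it acts as a rotation, so a single fixed vertex of `C` makes
it fix all of `C`. The set `S` of common vertices of `C_i` and `C_j` is preserved by `f`, and
any two vertices of `S` are joined by a tree path running inside both cycles. If `S` is a proper
arc of `C_i` (or of `C_j`), a vertex of `S` whose predecessor on the cycle lies outside `S` is
therefore unique, hence fixed by `f`. Otherwise both cycles have vertex set `S`, and two
fundamental cycles with the same vertices coincide.
-/

theorem List.sum_count_prodMk_left {α β : Type*} [DecidableEq α] [DecidableEq β] [Fintype β]
    (l : List (α × β)) (a : α) : ∑ b, l.count (a, b) = (l.map Prod.fst).count a := by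
  induction l with
  | nil => simp
  | cons p l ih =>
    obtain ⟨a', b'⟩ := p
    simp only [List.count_cons, Finset.sum_add_distrib, ih, List.map_cons, beq_iff_eq,
      Prod.mk.injEq]
    by_cases h : a' = a <;> simp [h]

theorem List.sum_count_prodMk_right {α β : Type*} [DecidableEq α] [DecidableEq β] [Fintype α]
    (l : List (α × β)) (b : β) : ∑ a, l.count (a, b) = (l.map Prod.snd).count b := by
  induction l with
  | nil => simp
  | cons p l ih =>
    obtain ⟨a', b'⟩ := p
    simp only [List.count_cons, Finset.sum_add_distrib, ih, List.map_cons, beq_iff_eq,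
      Prod.mk.injEq]
    by_cases h : b' = b <;> simp [h]

namespace SimpleGraph

namespace Walk

section DartPairs

variable {G : SimpleGraph V} {x y : V}

def dartPairs (W : G.Walk x y) : List (V × V) := W.darts.map Dart.toProd

@[simp]
lemma dartPairs_cons {w : V} (h : G.Adj x w) (W : G.Walk w y) :
    (cons h W).dartPairs = (x, w) :: W.dartPairs := rfl

lemma adj_of_mem_dartPairs {W : G.Walk x y} {u v : V} (h : (u, v) ∈ W.dartPairs) :
    G.Adj u v := by
  obtain ⟨⟨_, hadj⟩, -, rfl⟩ := List.mem_map.mp h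
  exact hadj

lemma map_fst_dartPairs (W : G.Walk x y) : W.dartPairs.map Prod.fst = W.support.dropLast := by
  simp [dartPairs, ← map_fst_darts]

lemma map_snd_dartPairs (W : G.Walk x y) : W.dartPairs.map Prod.snd = W.support.tail := by
  simp [dartPairs, ← map_snd_darts]

lemma map_sym2Mk_dartPairs (W : G.Walk x y) :
    W.dartPairs.map (fun p => s(p.1, p.2)) = W.edges := by
  simp only [dartPairs, edges, List.map_map]
  rfl

lemma mem_dartPairs_or_of_mem_edges {W : G.Walk x y} {u v : V} (h : s(u, v) ∈ W.edges) :
    (u, v) ∈ W.dartPairs ∨ (v, u) ∈ W.dartPairs := by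
  rw [← map_sym2Mk_dartPairs] at h
  obtain ⟨⟨a, b⟩, hab, he⟩ := List.mem_map.mp h
  rcases Sym2.eq_iff.mp he with ⟨rfl, rfl⟩ | ⟨rfl, rfl⟩
  exacts [Or.inl hab, Or.inr hab]

lemma IsTrail.nodup_dartPairs {W : G.Walk x y} (hW : W.IsTrail) : W.dartPairs.Nodup := by
  apply List.Nodup.of_map (fun p => s(p.1, p.2))
  rw [map_sym2Mk_dartPairs]
  exact hW.edges_nodup

lemma IsTrail.swap_notMem_dartPairs {W : G.Walk x y} (hW : W.IsTrail) {u v : V}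
    (h : (u, v) ∈ W.dartPairs) : (v, u) ∉ W.dartPairs := by
  intro h'
  have hnd : (W.dartPairs.map fun p => s(p.1, p.2)).Nodup := by
    rw [map_sym2Mk_dartPairs]
    exact hW.edges_nodup
  have := List.inj_on_of_nodup_map hnd h h' Sym2.eq_swap
  exact (adj_of_mem_dartPairs h).ne (Prod.mk.inj this).1

variable [DecidableEq V]

def flow (W : G.Walk x y) (u v : V) : ℤ := W.dartPairs.count (u, v) - W.dartPairs.count (v, u)

lemma count_dropLast_support_eq (W : G.Walk x x) (u : V) :
    W.support.dropLast.count u = W.support.tail.count u := by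
  have h₁ := congrArg (List.count u) W.cons_tail_support
  have h₂ := congrArg (List.count u) (List.dropLast_append_getLast W.support_ne_nil)
  rw [getLast_support, List.count_append, List.count_singleton] at h₂
  rw [List.count_cons] at h₁
  grind

lemma flow_mem_cycleSpace [Fintype V] (W : G.Walk x x) : W.flow ∈ cycleSpace ℤ G := by
  refine ⟨fun u v huv => ?_, fun u v => by simp [flow], fun u => ?_⟩
  · have h₁ : (u, v) ∉ W.dartPairs := fun h => huv (adj_of_mem_dartPairs h)
    have h₂ : (v, u) ∉ W.dartPairs := fun h => huv (adj_of_mem_dartPairs h).symm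
    simp [flow, List.count_eq_zero_of_not_mem h₁, List.count_eq_zero_of_not_mem h₂]
  · simp only [flow, Finset.sum_sub_distrib, ← Nat.cast_sum]
    rw [List.sum_count_prodMk_left, List.sum_count_prodMk_right, map_fst_dartPairs,
      map_snd_dartPairs, count_dropLast_support_eq, sub_self]

lemma IsTrail.flow_eq_one_iff {W : G.Walk x y} (hW : W.IsTrail) {u v : V} :
    W.flow u v = 1 ↔ (u, v) ∈ W.dartPairs := by
  by_cases h : (u, v) ∈ W.dartPairs
  · have h' : (v, u) ∉ W.dartPairs := hW.swap_notMem_dartPairs h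
    simp [flow, h, List.count_eq_one_of_mem hW.nodup_dartPairs h,
      List.count_eq_zero_of_not_mem h']
  · simp only [flow, List.count_eq_zero_of_not_mem h, h, iff_false]
    omega

end DartPairs

section ClosedWalk

variable {G : SimpleGraph V} {x y : V}

lemma start_mem_of_end_mem {S : Set V} (q : G.Walk x y)
    (hS : ∀ a b, (a, b) ∈ q.dartPairs → b ∈ S → a ∈ S) (hy : y ∈ S) : x ∈ S := by
  induction q with
  | nil => exact hy
  | cons h q ih =>
    simp only [dartPairs_cons, List.mem_cons] at hS
    exact hS _ _ (.inl rfl) (ih (fun a b hab => hS a b (.inr hab)) hy)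

lemma support_subset_of_mem_of_predClosed {S : Set V} (W : G.Walk x x)
    (hS : ∀ a b, (a, b) ∈ W.dartPairs → b ∈ S → a ∈ S) {u : V} (hu : u ∈ W.support)
    (huS : u ∈ S) : ∀ v ∈ W.support, v ∈ S := by
  classical
  intro v hv
  have hu' : u ∈ (W.rotate v hv).support := (W.mem_support_rotate_iff v hv).mpr hu
  have hsub : ((W.rotate v hv).takeUntil u hu').darts ⊆ W.darts := fun d hd =>
    (W.rotate_darts v hv).mem_iff.mp ((W.rotate v hv).darts_takeUntil_subset_darts hu' hd)
  exact ((W.rotate v hv).takeUntil u hu').start_mem_of_end_mem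
    (fun a b hab => hS a b (List.map_subset Dart.toProd hsub hab)) huS

lemma mem_support_iff_exists_mem_dartPairs {W : G.Walk x x} (hW : ¬ W.Nil) {v : V} :
    v ∈ W.support ↔ ∃ u, (u, v) ∈ W.dartPairs := by
  have : v ∈ W.support ↔ v ∈ W.support.tail := by
    rw [mem_support_iff]
    exact ⟨fun h => h.elim (· ▸ end_mem_tail_support hW) id, .inr⟩
  rw [this, ← map_snd_dartPairs, List.mem_map]
  exact ⟨fun ⟨⟨u, _⟩, h, rfl⟩ => ⟨u, h⟩, fun ⟨u, h⟩ => ⟨_, h, rfl⟩⟩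

lemma apply_mem_support_iff {W : G.Walk x x} (hW : ¬ W.Nil) {g : V → V}
    (hsurj : Function.Surjective g) (hg : ∀ a b, (g a, g b) ∈ W.dartPairs ↔ (a, b) ∈ W.dartPairs)
    (v : V) : g v ∈ W.support ↔ v ∈ W.support := by
  rw [mem_support_iff_exists_mem_dartPairs hW, mem_support_iff_exists_mem_dartPairs hW]
  constructor
  · rintro ⟨z, hz⟩
    obtain ⟨z, rfl⟩ := hsurj z
    exact ⟨z, (hg z v).mp hz⟩
  · rintro ⟨z, hz⟩
    exact ⟨g z, (hg z v).mpr hz⟩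

lemma IsCycle.eq_of_mem_dartPairs {W : G.Walk x x} (hW : W.IsCycle) {u u' v : V}
    (h : (u, v) ∈ W.dartPairs) (h' : (u', v) ∈ W.dartPairs) : u = u' := by
  have hnd : (W.dartPairs.map Prod.snd).Nodup := by
    rw [map_snd_dartPairs]
    exact hW.support_nodup
  exact (Prod.mk.inj (List.inj_on_of_nodup_map hnd h h' rfl)).1

lemma IsCycle.support_subset_fixedPoints {W : G.Walk x x} (hW : W.IsCycle) {g : V → V}
    (hg : ∀ a b, (a, b) ∈ W.dartPairs → (g a, g b) ∈ W.dartPairs) {u : V}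
    (hu : u ∈ W.support) (hgu : g u = u) : ∀ v ∈ W.support, g v = v :=
  W.support_subset_of_mem_of_predClosed (S := Function.fixedPoints g)
    (fun a b hab (hb : g b = b) => hW.eq_of_mem_dartPairs (hb ▸ hg a b hab) hab) hu hgu

end ClosedWalk

section Arc

variable {G H : SimpleGraph V} {x : V} {W : G.Walk x x}

/-- A path along edges of `W` whose start has no `W`-predecessor on it can never turn back,
since each vertex of `W` has a unique predecessor. -/
lemma IsCycle.eq_or_exists_mem_dartPairs_of_isPath (hW : W.IsCycle) {a b : V}
    (q : H.Walk a b) (hq : q.IsPath) (hE : ∀ e ∈ q.edges, e ∈ W.edges)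
    (ha : ∀ z, (z, a) ∈ W.dartPairs → z ∉ q.support) :
    a = b ∨ ∃ z ∈ q.support, (z, b) ∈ W.dartPairs := by
  induction q with
  | nil => exact .inl rfl
  | @cons a w b h q ih =>
    rw [cons_isPath_iff] at hq
    have haw : (a, w) ∈ W.dartPairs := by
      refine (mem_dartPairs_or_of_mem_edges (hE _ (by simp))).resolve_right fun hwa => ?_
      exact ha w hwa (by simp)
    have hw : ∀ z, (z, w) ∈ W.dartPairs → z ∉ q.support := fun z hzw =>
      hW.eq_of_mem_dartPairs haw hzw ▸ hq.2
    rcases ih hq.1 (fun e he => hE e (by simp [he])) hw with rfl | ⟨z, hz, hzb⟩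
    · exact .inr ⟨a, by simp, haw⟩
    · exact .inr ⟨z, by simp [hz], hzb⟩

lemma IsCycle.eq_of_isPath_of_forall_notMem (hW : W.IsCycle) {a b : V}
    (q : H.Walk a b) (hq : q.IsPath) (hE : ∀ e ∈ q.edges, e ∈ W.edges)
    (ha : ∀ z, (z, a) ∈ W.dartPairs → z ∉ q.support)
    (hb : ∀ z, (z, b) ∈ W.dartPairs → z ∉ q.support) : a = b :=
  (hW.eq_or_exists_mem_dartPairs_of_isPath q hq hE ha).resolve_right
    fun ⟨z, hz, hzb⟩ => hb z hzb hz

variable {g : V → V} {S : Set V}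

lemma IsCycle.apply_eq_self_of_forall_notMem (hW : W.IsCycle) (hsurj : Function.Surjective g)
    (hg : ∀ a b, (g a, g b) ∈ W.dartPairs ↔ (a, b) ∈ W.dartPairs) (hS : ∀ v, g v ∈ S ↔ v ∈ S)
    (hconv : ∀ a ∈ S, ∀ b ∈ S, ∃ q : H.Walk a b,
      q.IsPath ∧ (∀ v ∈ q.support, v ∈ S) ∧ ∀ e ∈ q.edges, e ∈ W.edges)
    {u : V} (hu : u ∈ S) (hsrc : ∀ z, (z, u) ∈ W.dartPairs → z ∉ S) : g u = u := by
  have hsrc' : ∀ z, (z, g u) ∈ W.dartPairs → z ∉ S := by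
    intro z hz
    obtain ⟨z, rfl⟩ := hsurj z
    rw [hS]
    exact hsrc z ((hg z u).mp hz)
  obtain ⟨q, hq, hqS, hqE⟩ := hconv u hu (g u) ((hS u).mpr hu)
  exact (hW.eq_of_isPath_of_forall_notMem q hq hqE (fun z hz hzq => hsrc z hz (hqS z hzq))
    (fun z hz hzq => hsrc' z hz (hqS z hzq))).symm

lemma IsCycle.exists_apply_eq_self_or_support_subset (hW : W.IsCycle)
    (hsurj : Function.Surjective g)
    (hg : ∀ a b, (g a, g b) ∈ W.dartPairs ↔ (a, b) ∈ W.dartPairs) (hS : ∀ v, g v ∈ S ↔ v ∈ S)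
    (hconv : ∀ a ∈ S, ∀ b ∈ S, ∃ q : H.Walk a b,
      q.IsPath ∧ (∀ v ∈ q.support, v ∈ S) ∧ ∀ e ∈ q.edges, e ∈ W.edges)
    {u : V} (hu : u ∈ S) (huW : u ∈ W.support) :
    (∃ v ∈ S, g v = v) ∨ ∀ v ∈ W.support, v ∈ S := by
  by_cases hsrc : ∃ v ∈ S, ∀ z, (z, v) ∈ W.dartPairs → z ∉ S
  · obtain ⟨v, hv, hvsrc⟩ := hsrc
    exact .inl ⟨v, hv, hW.apply_eq_self_of_forall_notMem hsurj hg hS hconv hv hvsrc⟩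
  · push Not at hsrc
    refine .inr (W.support_subset_of_mem_of_predClosed (fun a b hab hb => ?_) huW hu)
    obtain ⟨z, hzb, hz⟩ := hsrc b hb
    exact hW.eq_of_mem_dartPairs hzb hab ▸ hz

theorem IsCycle.apply_eq_self_of_mem_support_inter {x₁ x₂ : V} {W₁ : G.Walk x₁ x₁}
    {W₂ : G.Walk x₂ x₂} (hc₁ : W₁.IsCycle) (hc₂ : W₂.IsCycle) (hsurj : Function.Surjective g)
    (hg₁ : ∀ a b, (g a, g b) ∈ W₁.dartPairs ↔ (a, b) ∈ W₁.dartPairs)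
    (hg₂ : ∀ a b, (g a, g b) ∈ W₂.dartPairs ↔ (a, b) ∈ W₂.dartPairs)
    (hconv : ∀ a, a ∈ W₁.support → a ∈ W₂.support → ∀ b, b ∈ W₁.support → b ∈ W₂.support →
      ∃ q : H.Walk a b, q.IsPath ∧ (∀ v ∈ q.support, v ∈ W₁.support ∧ v ∈ W₂.support) ∧
        ∀ e ∈ q.edges, e ∈ W₁.edges ∧ e ∈ W₂.edges)
    {u : V} (hu₁ : u ∈ W₁.support) (hu₂ : u ∈ W₂.support)
    (hne : ¬ (W₁.support ⊆ W₂.support ∧ W₂.support ⊆ W₁.support)) :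
    ∀ v, v ∈ W₁.support ∨ v ∈ W₂.support → g v = v := by
  let S : Set V := {v | v ∈ W₁.support ∧ v ∈ W₂.support}
  have hS (v : V) : g v ∈ S ↔ v ∈ S := and_congr
    (apply_mem_support_iff hc₁.not_nil hsurj hg₁ v) (apply_mem_support_iff hc₂.not_nil hsurj hg₂ v)
  have huS : u ∈ S := ⟨hu₁, hu₂⟩
  suffices ∃ w ∈ S, g w = w by
    obtain ⟨w, ⟨hw₁, hw₂⟩, hgw⟩ := this
    rintro v (hv | hv)
    exacts [hc₁.support_subset_fixedPoints (fun a b => (hg₁ a b).mpr) hw₁ hgw v hv,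
      hc₂.support_subset_fixedPoints (fun a b => (hg₂ a b).mpr) hw₂ hgw v hv]
  rcases hc₁.exists_apply_eq_self_or_support_subset hsurj hg₁ hS
    (fun a ha b hb => (hconv a ha.1 ha.2 b hb.1 hb.2).imp
      fun _ ⟨hq, hqS, hqE⟩ => ⟨hq, hqS, fun e he => (hqE e he).1⟩) huS hu₁ with hfix | hcov₁
  · exact hfix
  rcases hc₂.exists_apply_eq_self_or_support_subset hsurj hg₂ hS
    (fun a ha b hb => (hconv a ha.1 ha.2 b hb.1 hb.2).imp
      fun _ ⟨hq, hqS, hqE⟩ => ⟨hq, hqS, fun e he => (hqE e he).2⟩) huS hu₂ with hfix | hcov₂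
  · exact hfix
  exact absurd ⟨fun v hv => (hcov₁ v hv).2, fun v hv => (hcov₂ v hv).1⟩ hne

end Arc

lemma exists_isSubwalk_or_reverse_isSubwalk {G : SimpleGraph V} [DecidableEq V] {s t x y : V}
    (p : G.Walk s t) (hx : x ∈ p.support) (hy : y ∈ p.support) :
    ∃ r : G.Walk x y, r.IsSubwalk p ∨ r.reverse.IsSubwalk p := by
  by_cases hy' : y ∈ (p.dropUntil x hx).support
  · exact ⟨_, .inl ((isSubwalk_takeUntil _ hy').trans (isSubwalk_dropUntil p hx))⟩
  · have hy'' : y ∈ (p.takeUntil x hx).support := by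
      rw [← p.take_spec hx, mem_support_append_iff] at hy
      exact hy.resolve_right hy'
    refine ⟨((p.takeUntil x hx).dropUntil y hy'').reverse, .inr ?_⟩
    rw [reverse_reverse]
    exact (isSubwalk_dropUntil _ hy'').trans (isSubwalk_takeUntil p hx)

lemma start_eq_of_support_eq {G : SimpleGraph V} {s t s' t' : V} {p : G.Walk s t}
    {q : G.Walk s' t'} (h : p.support = q.support) : s = s' :=
  (List.cons.inj (p.cons_tail_support.trans (h.trans q.cons_tail_support.symm))).1

lemma start_eq_and_end_eq_of_support_eq {G : SimpleGraph V} {s t s' t' : V} {p : G.Walk s t}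
    {q : G.Walk s' t'} (h : p.support = q.support) : s = s' ∧ t = t' :=
  ⟨start_eq_of_support_eq h, start_eq_of_support_eq (p := p.reverse) (q := q.reverse) (by simp [h])⟩

end Walk

open Walk

section Tree

variable {T : SimpleGraph V} {s t x y : V} {p : T.Walk s t} {q : T.Walk x y}

lemma IsAcyclic.isSubwalk_or_reverse_isSubwalk (hT : T.IsAcyclic) (hp : p.IsPath)
    (hq : q.IsPath) (hx : x ∈ p.support) (hy : y ∈ p.support) :
    q.IsSubwalk p ∨ q.reverse.IsSubwalk p := by
  classical
  obtain ⟨r, hr⟩ := p.exists_isSubwalk_or_reverse_isSubwalk hx hy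
  have hrp : r.IsPath := hr.elim (isPath_of_isSubwalk · hp)
    fun h => by simpa using (isPath_of_isSubwalk h hp).reverse
  obtain rfl : q = r := congrArg Subtype.val ((hT.subsingleton_path x y).elim ⟨q, hq⟩ ⟨r, hrp⟩)
  exact hr

lemma IsAcyclic.support_subset_of_isPath (hT : T.IsAcyclic) (hp : p.IsPath) (hq : q.IsPath)
    (hx : x ∈ p.support) (hy : y ∈ p.support) : q.support ⊆ p.support := by
  rcases hT.isSubwalk_or_reverse_isSubwalk hp hq hx hy with h | h
  · exact h.support_subset
  · simpa using h.support_subset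

lemma IsAcyclic.edges_subset_of_isPath (hT : T.IsAcyclic) (hp : p.IsPath) (hq : q.IsPath)
    (hx : x ∈ p.support) (hy : y ∈ p.support) : q.edges ⊆ p.edges := by
  rcases hT.isSubwalk_or_reverse_isSubwalk hp hq hx hy with h | h
  · exact h.edges_subset
  · simpa using h.edges_subset

lemma IsAcyclic.endpoints_eq_of_support_subset (hT : T.IsAcyclic) (hp : p.IsPath)
    (hq : q.IsPath) (hpq : p.support ⊆ q.support) (hqp : q.support ⊆ p.support) :
    (x = s ∧ y = t) ∨ (x = t ∧ y = s) := by
  have hlen : p.support.length ≤ q.support.length := hp.support_nodup.length_le_of_subset hpq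
  rcases hT.isSubwalk_or_reverse_isSubwalk hp hq (hqp q.start_mem_support)
    (hqp q.end_mem_support) with h | h
  · exact .inl (start_eq_and_end_eq_of_support_eq
      ((isSubwalk_iff_support_isInfix.mp h).eq_of_length_le hlen))
  · have h' := (isSubwalk_iff_support_isInfix.mp h).eq_of_length_le (by simpa using hlen)
    exact .inr (start_eq_and_end_eq_of_support_eq h').symm

end Tree

section FundamentalCycle

variable {G T : SimpleGraph V} (hTG : T ≤ G) {a b : V} (h : G.Adj a b) {p : T.Walk b a}

lemma Walk.isCycle_cons_mapLe (hp : p.IsPath) (hn : ¬ T.Adj a b) :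
    (cons h (p.mapLe hTG)).IsCycle := by
  rw [cons_isCycle_iff, isPath_mapLe, edges_mapLe_eq_edges]
  exact ⟨hp, fun he => hn (p.adj_of_mem_edges he)⟩

lemma Walk.mem_support_cons_mapLe {v : V} :
    v ∈ (cons h (p.mapLe hTG)).support ↔ v ∈ p.support := by
  rw [support_cons, support_mapLe_eq_support, List.mem_cons]
  exact ⟨fun hv => hv.elim (· ▸ p.end_mem_support) id, .inr⟩

lemma Walk.edges_subset_edges_cons_mapLe : p.edges ⊆ (cons h (p.mapLe hTG)).edges := by
  simp

lemma IsAcyclic.subset_cons_mapLe_of_isPath (hT : T.IsAcyclic) (hp : p.IsPath) {x y : V}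
    {q : T.Walk x y} (hq : q.IsPath) (hx : x ∈ (cons h (p.mapLe hTG)).support)
    (hy : y ∈ (cons h (p.mapLe hTG)).support) :
    (∀ v ∈ q.support, v ∈ (cons h (p.mapLe hTG)).support) ∧
      ∀ e ∈ q.edges, e ∈ (cons h (p.mapLe hTG)).edges := by
  rw [mem_support_cons_mapLe] at hx hy
  refine ⟨fun v hv => ?_, fun e he => ?_⟩
  · exact (mem_support_cons_mapLe hTG h).mpr (hT.support_subset_of_isPath hp hq hx hy hv)
  · exact edges_subset_edges_cons_mapLe hTG h (hT.edges_subset_of_isPath hp hq hx hy he)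

lemma IsAcyclic.toSubgraph_cons_mapLe_eq (hT : T.IsAcyclic) (hp : p.IsPath) {a' b' : V}
    (h' : G.Adj a' b') {p' : T.Walk b' a'} (hp' : p'.IsPath)
    (hpp' : (cons h (p.mapLe hTG)).support ⊆ (cons h' (p'.mapLe hTG)).support)
    (hp'p : (cons h' (p'.mapLe hTG)).support ⊆ (cons h (p.mapLe hTG)).support) :
    (cons h (p.mapLe hTG)).toSubgraph = (cons h' (p'.mapLe hTG)).toSubgraph := by
  have hsub : p.support ⊆ p'.support := fun v hv =>
    (mem_support_cons_mapLe hTG h').mp (hpp' ((mem_support_cons_mapLe hTG h).mpr hv))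
  have hsub' : p'.support ⊆ p.support := fun v hv =>
    (mem_support_cons_mapLe hTG h).mp (hp'p ((mem_support_cons_mapLe hTG h').mpr hv))
  rcases hT.endpoints_eq_of_support_subset hp hp' hsub hsub' with ⟨rfl, rfl⟩ | ⟨rfl, rfl⟩
  · obtain rfl : p' = p :=
      congrArg Subtype.val ((hT.subsingleton_path _ _).elim ⟨p', hp'⟩ ⟨p, hp⟩)
    rfl
  · obtain rfl : p' = p.reverse :=
      congrArg Subtype.val ((hT.subsingleton_path _ _).elim ⟨p', hp'⟩ ⟨p.reverse, hp.reverse⟩)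
    simp only [Walk.toSubgraph, ← reverse_mapLe, toSubgraph_reverse, subgraphOfAdj_symm h']

end FundamentalCycle

end SimpleGraph

open SimpleGraph.Walk in
lemma FixesH1.mem_dartPairs_iff [Fintype V] {G : SimpleGraph V} {f : G ≃g G}
    (hf : FixesH1 ℤ G f) {x : V} {W : G.Walk x x} (hW : W.IsTrail) (u v : V) :
    (f u, f v) ∈ W.dartPairs ↔ (u, v) ∈ W.dartPairs := by
  classical
  rw [← hW.flow_eq_one_iff, ← hW.flow_eq_one_iff, hf _ W.flow_mem_cycleSpace]

open SimpleGraph.Walk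

theorem kernel_fixes_intersecting_fundamental_cycles_pointwise_general [Fintype V]
    (G : SimpleGraph V)
    (T : SimpleGraph V) (hTG : T ≤ G) (hT : T.IsTree)
    (f : G ≃g G) (hf : FixesH1 ℤ G f)
    -- two cotree darts and the corresponding unique paths in `T`
    {a₁ b₁ a₂ b₂ : V} (h₁ : G.Adj a₁ b₁) (hn₁ : ¬ T.Adj a₁ b₁)
    (h₂ : G.Adj a₂ b₂) (hn₂ : ¬ T.Adj a₂ b₂)
    (p₁ : T.Walk b₁ a₁) (hp₁ : p₁.IsPath) (p₂ : T.Walk b₂ a₂) (hp₂ : p₂.IsPath)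
    -- the two fundamental cycles are distinct but intersect nontrivially
    (hne : (Walk.cons h₁ (p₁.mapLe hTG)).toSubgraph ≠ (Walk.cons h₂ (p₂.mapLe hTG)).toSubgraph)
    (hmeet : ((Walk.cons h₁ (p₁.mapLe hTG)).toSubgraph ⊓
        (Walk.cons h₂ (p₂.mapLe hTG)).toSubgraph).verts.Nonempty) :
    -- `f` fixes the union of the two cycles pointwise
    ∀ v ∈ ((Walk.cons h₁ (p₁.mapLe hTG)).toSubgraph ⊔
        (Walk.cons h₂ (p₂.mapLe hTG)).toSubgraph).verts, f v = v := by
  have hc₁ := isCycle_cons_mapLe hTG h₁ hp₁ hn₁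
  have hc₂ := isCycle_cons_mapLe hTG h₂ hp₂ hn₂
  obtain ⟨u, hu⟩ := hmeet
  rw [Subgraph.verts_inf, Set.mem_inter_iff, mem_verts_toSubgraph, mem_verts_toSubgraph] at hu
  intro v hv
  rw [Subgraph.verts_sup, Set.mem_union, mem_verts_toSubgraph, mem_verts_toSubgraph] at hv
  refine hc₁.apply_eq_self_of_mem_support_inter hc₂ f.surjective
    (hf.mem_dartPairs_iff hc₁.isCircuit.isTrail) (hf.mem_dartPairs_iff hc₂.isCircuit.isTrail)
    (H := T) ?_ hu.1 hu.2 (fun h => hne ?_) v hv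
  · intro a ha₁ ha₂ b hb₁ hb₂
    obtain ⟨q, hq, -⟩ := hT.existsUnique_path a b
    obtain ⟨hs₁, he₁⟩ := hT.isAcyclic.subset_cons_mapLe_of_isPath hTG h₁ hp₁ hq ha₁ hb₁
    obtain ⟨hs₂, he₂⟩ := hT.isAcyclic.subset_cons_mapLe_of_isPath hTG h₂ hp₂ hq ha₂ hb₂
    exact ⟨q, hq, fun v hv => ⟨hs₁ v hv, hs₂ v hv⟩, fun e he => ⟨he₁ e he, he₂ e he⟩⟩
  · exact hT.isAcyclic.toSubgraph_cons_mapLe_eq hTG h₁ hp₁ h₂ hp₂ h.1 h.2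

theorem kernel_fixes_intersecting_fundamental_cycles_pointwise [Fintype V]
    (G : SimpleGraph V) (hG : G.Connected)
    (T : SimpleGraph V) (hTG : T ≤ G) (hT : T.IsTree)
    (f : G ≃g G) (hf : FixesH1 ℤ G f)
    -- two cotree darts and the corresponding unique paths in `T`
    {a₁ b₁ a₂ b₂ : V} (h₁ : G.Adj a₁ b₁) (hn₁ : ¬ T.Adj a₁ b₁)
    (h₂ : G.Adj a₂ b₂) (hn₂ : ¬ T.Adj a₂ b₂)
    (p₁ : T.Walk b₁ a₁) (hp₁ : p₁.IsPath) (p₂ : T.Walk b₂ a₂) (hp₂ : p₂.IsPath)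
    -- the two fundamental cycles are distinct but intersect nontrivially
    (hne : (Walk.cons h₁ (p₁.mapLe hTG)).toSubgraph ≠ (Walk.cons h₂ (p₂.mapLe hTG)).toSubgraph)
    (hmeet : ((Walk.cons h₁ (p₁.mapLe hTG)).toSubgraph ⊓
        (Walk.cons h₂ (p₂.mapLe hTG)).toSubgraph).verts.Nonempty) :
    -- `f` fixes the union of the two cycles pointwise
    ∀ v ∈ ((Walk.cons h₁ (p₁.mapLe hTG)).toSubgraph ⊔
        (Walk.cons h₂ (p₂.mapLe hTG)).toSubgraph).verts, f v = v :=
  kernel_fixes_intersecting_fundamental_cycles_pointwise_general G T hTG hT f hf h₁ hn₁ h₂ hn₂ p₁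
    hp₁ p₂ hp₂ hne hmeet
end

section
/- Let X be a finite simple connected graph that is not a tree. Define X' as the graph obtained from X by deleting all pendant trees (i.e., X' is the maximal subgraph of X with minimum degree at least 2). If every pendant tree of X is rigid (has trivial automorphism group as a rooted tree), then the kernel of the action of Aut(X) on H_1(X,ℤ) embeds into the kernel of the action of Aut(X') on H_1(X',ℤ). -/
open SimpleGraph
variable {V : Type*}

variable {V : Type*}

/-- The 2-core of `G`: the maximal subgraph all of whose vertices have degree at least 2
(equivalently, the subgraph obtained by deleting all pendant trees). -/
def IsTwoCore (G : SimpleGraph V) (H : G.Subgraph) : Prop :=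
  (∀ v ∈ H.verts, 2 ≤ (H.neighborSet v).ncard) ∧
  ∀ K : G.Subgraph, (∀ v ∈ K.verts, 2 ≤ (K.neighborSet v).ncard) → K ≤ H

/-- A pendant tree of `G` rooted at `w`: `A` is the vertex set of a maximal acyclic
component of `G - w` hanging at `w`, so `{w} ∪ A` induces a tree. -/
def IsPendantTree (G : SimpleGraph V) (w : V) (A : Set V) : Prop :=
  w ∉ A ∧ A.Nonempty ∧
  (∀ a ∈ A, ∀ b : V, G.Adj a b → b = w ∨ b ∈ A) ∧
  (G.induce (insert w A)).IsTree

/-! Automorphisms preserve degrees, so by maximality they map the 2-core onto itself; and a flow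
on the core is a flow on `X`, so an automorphism acting trivially on `H₁(X)` acts trivially on
`H₁(X')`. For injectivity, if `f` and `g` agree on the core then `g⁻¹ f` fixes the core
pointwise. Every vertex outside the core lies in a pendant tree rooted at some core vertex `w`:
the vertices reachable from `w` while avoiding the rest of the core (a second edge back to the
core would put a path between core vertices, hence its interior, into the core). The map
`g⁻¹ f` restricts to an automorphism of that tree fixing `w`, the identity by rigidity. -/

variable {G : SimpleGraph V}

lemma cycleSpace_mono (R : Type*) [CommRing R] [Fintype V] {G₁ G₂ : SimpleGraph V}
    (h : G₁ ≤ G₂) : cycleSpace R G₁ ≤ cycleSpace R G₂ :=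
  fun _ ⟨hsupp, hanti, hdiv⟩ => ⟨fun u v huv => hsupp u v (fun h₁ => huv (h h₁)), hanti, hdiv⟩

lemma SimpleGraph.Subgraph.two_le_ncard_neighborSet_of_le [Finite V] {K K' : G.Subgraph}
    (h : K ≤ K') {v : V} (hv : 2 ≤ (K.neighborSet v).ncard) : 2 ≤ (K'.neighborSet v).ncard :=
  hv.trans (Set.ncard_le_ncard (Subgraph.neighborSet_subset_of_subgraph h v) (Set.toFinite _))

/-- For `w` in the core, the union of the pendant trees hanging at `w`. -/
def hangingSet (H : G.Subgraph) (w : V) : Set V :=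
  {v | v ∉ H.verts ∧ ∃ p : G.Walk w v, ∀ x ∈ p.support, x = w ∨ x ∉ H.verts}

section hangingSet

variable {H : G.Subgraph} {w : V}

lemma exists_walk_of_mem_insert_hangingSet {v : V} (hv : v ∈ insert w (hangingSet H w)) :
    ∃ p : G.Walk w v, ∀ x ∈ p.support, x = w ∨ x ∉ H.verts := by
  rcases hv with rfl | ⟨-, hp⟩
  · exact ⟨.nil, by simp⟩
  · exact hp

lemma mem_hangingSet_of_adj {a b : V} (ha : a ∈ insert w (hangingSet H w)) (hab : G.Adj a b)
    (hb : b ∉ H.verts) : b ∈ hangingSet H w := by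
  obtain ⟨p, hp⟩ := exists_walk_of_mem_insert_hangingSet ha
  refine ⟨hb, p.concat hab, fun x hx => ?_⟩
  rw [Walk.support_concat, List.mem_append, List.mem_singleton] at hx
  rcases hx with hx | rfl
  · exact hp x hx
  · exact Or.inr hb

lemma support_subset_insert_hangingSet {v : V} {p : G.Walk w v}
    (hp : ∀ x ∈ p.support, x = w ∨ x ∉ H.verts) {x : V} (hx : x ∈ p.support) :
    x ∈ insert w (hangingSet H w) := by
  classical
  rcases hp x hx with rfl | hxH
  · exact Set.mem_insert _ _
  · exact Or.inr ⟨hxH, p.takeUntil x hx,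
      fun y hy => hp y (p.support_takeUntil_subset_support hx hy)⟩

lemma exists_mem_hangingSet_of_walk {v u : V} (p : G.Walk v u) (hv : v ∉ H.verts)
    (hu : u ∈ H.verts) : ∃ w ∈ H.verts, v ∈ hangingSet H w := by
  induction p with
  | nil => exact absurd hu hv
  | @cons v v₁ u hadj q ih =>
    by_cases hv₁ : v₁ ∈ H.verts
    · exact ⟨v₁, hv₁, mem_hangingSet_of_adj (Set.mem_insert _ _) hadj.symm hv⟩
    · obtain ⟨w, hw, hv₁A⟩ := ih hv₁ hu
      exact ⟨w, hw, mem_hangingSet_of_adj (Or.inr hv₁A) hadj.symm hv⟩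

lemma mapsTo_insert_hangingSet {e : G ≃g G} (he : ∀ x ∈ H.verts, e x = x)
    (hw : w ∈ H.verts) :
    Set.MapsTo e (insert w (hangingSet H w)) (insert w (hangingSet H w)) := by
  have hcore : ∀ x, x ∉ H.verts → e x ∉ H.verts := fun x hx hex =>
    hx (e.injective (he _ hex) ▸ hex)
  rintro x (rfl | ⟨hxH, p, hp⟩)
  · exact Or.inl (he _ hw)
  refine Or.inr ⟨hcore x hxH, (p.map e.toHom).copy (he w hw) rfl, fun y hy => ?_⟩
  rw [Walk.support_copy, Walk.support_map, List.mem_map] at hy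
  obtain ⟨y, hy, rfl⟩ := hy
  rcases hp y hy with rfl | hyH
  · exact Or.inl (he _ hw)
  · exact Or.inr (hcore _ hyH)

end hangingSet

def PendantTreesRigid (G : SimpleGraph V) : Prop :=
  ∀ (w : V) (A : Set V), IsPendantTree G w A →
    ∀ φ : G.induce (insert w A) ≃g G.induce (insert w A),
      φ ⟨w, Set.mem_insert w A⟩ = ⟨w, Set.mem_insert w A⟩ → ∀ x, φ x = x

namespace IsTwoCore

variable {H : G.Subgraph} {w : V}

lemma toSubgraph_le_of_isCycle (hH : IsTwoCore G H) {u : V} {c : G.Walk u u}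
    (hc : c.IsCycle) : c.toSubgraph ≤ H :=
  hH.2 _ fun _ hx => (hc.ncard_neighborSet_toSubgraph_eq_two (c.mem_verts_toSubgraph.mp hx)).ge

/-- Adding the path to the core keeps all degrees at least two: its interior vertices have degree
two on the path. -/
lemma toSubgraph_le_of_isPath [Finite V] (hH : IsTwoCore G H) {u v : V} {p : G.Walk u v}
    (hp : p.IsPath) (hu : u ∈ H.verts) (hv : v ∈ H.verts) : p.toSubgraph ≤ H := by
  refine le_sup_right.trans (hH.2 (H ⊔ p.toSubgraph) fun x hx => ?_)
  by_cases hxH : x ∈ H.verts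
  · exact Subgraph.two_le_ncard_neighborSet_of_le le_sup_left (hH.1 x hxH)
  · have hxp : x ∈ p.support := by simpa [hxH] using hx
    obtain ⟨i, rfl, hi⟩ := p.mem_support_iff_exists_getVert.mp hxp
    have hi0 : i ≠ 0 := by rintro rfl; simp_all
    have hil : i < p.length := hi.lt_of_ne (by rintro rfl; simp_all)
    exact Subgraph.two_le_ncard_neighborSet_of_le le_sup_right
      (hp.ncard_neighborSet_toSubgraph_internal_eq_two hi0 hil).ge

lemma verts_nonempty (hH : IsTwoCore G H) (hG : ¬ G.IsAcyclic) : H.verts.Nonempty := by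
  obtain ⟨v, c, hc⟩ : ∃ v, ∃ c : G.Walk v v, c.IsCycle := by
    simpa [IsAcyclic] using hG
  exact ⟨v, (hH.toSubgraph_le_of_isCycle hc).1 c.start_mem_verts_toSubgraph⟩

lemma map_le [Finite V] (hH : IsTwoCore G H) (e : G ≃g G) : H.map e.toHom ≤ H := by
  refine hH.2 _ ?_
  rintro _ ⟨u, hu, rfl⟩
  calc 2 ≤ (H.neighborSet u).ncard := hH.1 u hu
    _ = (e '' H.neighborSet u).ncard := (Set.ncard_image_of_injective _ e.injective).symm
    _ ≤ _ := Set.ncard_le_ncard (by rintro _ ⟨y, hy, rfl⟩; exact ⟨u, y, hy, rfl, rfl⟩)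
      (Set.toFinite _)

lemma map_eq [Finite V] (hH : IsTwoCore G H) (e : G ≃g G) : H.map e.toHom = H := by
  refine le_antisymm (hH.map_le e) ?_
  have h := Subgraph.map_mono (f := e.toHom) (hH.map_le e.symm)
  rwa [← Subgraph.map_comp, show e.toHom.comp e.symm.toHom = Hom.id by ext; simp,
    Subgraph.map_id] at h

lemma eq_or_mem_hangingSet_of_adj [Finite V] (hH : IsTwoCore G H) (hw : w ∈ H.verts)
    {a b : V} (ha : a ∈ hangingSet H w) (hab : G.Adj a b) : b = w ∨ b ∈ hangingSet H w := by
  classical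
  by_cases hb : b ∈ H.verts
  · obtain ⟨haH, p, hp⟩ := ha
    refine Or.inl (by_contra fun hbw => haH ?_)
    have hbp : b ∉ p.bypass.reverse.support := fun h => by
      rcases hp b (p.support_bypass_subset_support (by simpa using h)) with h | h
      exacts [hbw h, h hb]
    have hpath : (Walk.cons hab.symm p.bypass.reverse).IsPath :=
      p.bypass_isPath.reverse.cons hbp
    exact (hH.toSubgraph_le_of_isPath hpath hb hw).1 (by simp)
  · exact Or.inr (mem_hangingSet_of_adj (Or.inr ha) hab hb)

lemma isPendantTree_hangingSet [Finite V] (hH : IsTwoCore G H) (hw : w ∈ H.verts)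
    (hne : (hangingSet H w).Nonempty) : IsPendantTree G w (hangingSet H w) := by
  refine ⟨fun h => h.1 hw, hne, fun a ha b hab => hH.eq_or_mem_hangingSet_of_adj hw ha hab,
    induce_connected_of_patches w (Set.mem_insert _ _) fun hv => ?_, fun z c hc => ?_⟩
  · obtain ⟨p, hp⟩ := exists_walk_of_mem_insert_hangingSet hv
    exact ⟨_, fun x hx => support_subset_insert_hangingSet hp hx, p.start_mem_support,
      p.end_mem_support, p.connected_induce_support.preconnected _ _⟩
  · -- the cycle lies in the core, which meets `insert w (hangingSet H w)` only in `w`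
    have hc' := hc.map (f := (Embedding.induce (insert w (hangingSet H w))).toHom)
      Subtype.val_injective
    have hw_of_mem : ∀ x ∈ c.support, (x : V) = w := fun x hx => by
      have hxH : (x : V) ∈ H.verts := (hH.toSubgraph_le_of_isCycle hc').1
        (Walk.mem_verts_toSubgraph _ |>.mpr (by
          rw [Walk.support_map]; exact List.mem_map_of_mem hx))
      rcases x.2 with h | h
      exacts [h, absurd hxH h.1]
    have hadj := c.adj_snd hc.not_nil
    rw [comap_adj, Function.Embedding.subtype_apply, Function.Embedding.subtype_apply,
      hw_of_mem _ c.start_mem_support, hw_of_mem _ (c.getVert_mem_support 1)] at hadj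
    exact G.irrefl hadj

lemma eq_self_of_forall_mem_verts [Finite V] (hH : IsTwoCore G H)
    (hG : G.Connected) (hnt : ¬ G.IsAcyclic) (hrigid : PendantTreesRigid G) {e : G ≃g G}
    (he : ∀ x ∈ H.verts, e x = x) (v : V) : e v = v := by
  by_cases hv : v ∈ H.verts
  · exact he v hv
  obtain ⟨u, hu⟩ := hH.verts_nonempty hnt
  obtain ⟨w, hw, hvA⟩ := exists_mem_hangingSet_of_walk (hG.preconnected v u).some hv hu
  have hbij : Set.BijOn e (insert w (hangingSet H w)) (insert w (hangingSet H w)) :=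
    (Set.toFinite _).injOn_iff_bijOn_of_mapsTo (mapsTo_insert_hangingSet he hw)
      |>.mp e.injective.injOn
  exact congrArg Subtype.val <| hrigid w _ (hH.isPendantTree_hangingSet hw ⟨v, hvA⟩)
    (e.induce hbij) (Subtype.ext (he w hw)) ⟨v, Or.inr hvA⟩

end IsTwoCore

theorem kernel_embeds_into_core_kernel [Fintype V] (G : SimpleGraph V)
    (hG : G.Connected) (hnt : ¬ G.IsAcyclic)
    (H : G.Subgraph) (hH : IsTwoCore G H)
    (hrigid : ∀ (w : V) (A : Set V), IsPendantTree G w A →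
      ∀ φ : G.induce (insert w A) ≃g G.induce (insert w A),
        φ ⟨w, Set.mem_insert w A⟩ = ⟨w, Set.mem_insert w A⟩ → ∀ x, φ x = x) :
    (∀ f : G ≃g G, FixesH1 ℤ G f →
      H.map f.toHom = H ∧
      -- the restriction of `f` to the core acts trivially on `H₁(X',ℤ)`
      ∀ c ∈ cycleSpace ℤ H.spanningCoe, ∀ u v : V, c (f u) (f v) = c u v) ∧
    -- the restriction map from the kernel is injective
    (∀ f g : G ≃g G, FixesH1 ℤ G f → FixesH1 ℤ G g →
      (∀ v ∈ H.verts, f v = g v) → ∀ v : V, f v = g v) := by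
  refine ⟨fun f hf => ⟨hH.map_eq f, fun c hc => hf c (cycleSpace_mono ℤ H.spanningCoe_le hc)⟩,
    fun f g _ _ hfg v => ?_⟩
  have hcore : ∀ x ∈ H.verts, (f.trans g.symm) x = x := fun x hx => by
    simp [hfg x hx]
  exact g.symm_apply_eq.mp (hH.eq_self_of_forall_mem_verts hG hnt hrigid hcore v)
end
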